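/- arXiv:2007.08741 — 2 statements merged into one kernel-verified Lean document; each statement's English description precedes it below -/
import Mathlib

section
/- Let ε > 0 be rational with 1/ε ∈ ℕ, G_ε = {kε : 0 ≤ k ≤ 1/ε}, f : G_ε → ℚ, and Df(x) = (f(x+ε)-f(x))/ε. Suppose q > 0 and a, x ∈ G_ε with a < x are such that |Df(u) - Df(a)| < q for all u ∈ G_ε with a ≤ u < x. Then |(f(x)-f(a))/(x-a) - Df(a)| < q. -/
/-- If the difference quotient of `f` varies by less than `q` on the grid points of
`[a, x)`, then the secant slope from `a` to `x` differs from `Df(a)` by less than `q`. -/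
theorem stmt_5 (ε : ℚ) (hε : 0 < ε) (N : ℕ) (hN : (N : ℚ) = 1 / ε)
    (f Df : ℚ → ℚ) (hDf : ∀ x : ℚ, Df x = (f (x + ε) - f x) / ε)
    (q : ℚ) (hq : 0 < q) (j k : ℕ) (hjk : j < k) (hk : k ≤ N)
    (hvar : ∀ i ∈ Finset.Ico j k, |Df ((i : ℚ) * ε) - Df ((j : ℚ) * ε)| < q) :
    |(f ((k : ℚ) * ε) - f ((j : ℚ) * ε)) / ((k : ℚ) * ε - (j : ℚ) * ε)
        - Df ((j : ℚ) * ε)| < q := by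
  have tel : ∑ i ∈ Finset.Ico j k, (f (((i : ℚ) + 1) * ε) - f ((i : ℚ) * ε))
      = f ((k : ℚ) * ε) - f ((j : ℚ) * ε) := by
    rw [Finset.sum_Ico_eq_sub _ hjk.le]
    have h1 : ∀ n : ℕ, ∑ i ∈ Finset.range n, (f (((i : ℚ) + 1) * ε) - f ((i : ℚ) * ε))
        = f ((n : ℚ) * ε) - f 0 := by
      intro n
      have := Finset.sum_range_sub (fun i : ℕ => f ((i : ℚ) * ε)) n
      simpa [Nat.cast_add, Nat.cast_one] using this
    rw [h1, h1]; ring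
  have hterm : ∀ i : ℕ, f (((i : ℚ) + 1) * ε) - f ((i : ℚ) * ε) = ε * Df ((i : ℚ) * ε) := by
    intro i
    rw [hDf]
    field_simp
  have hsum : f ((k : ℚ) * ε) - f ((j : ℚ) * ε) = ε * ∑ i ∈ Finset.Ico j k, Df ((i : ℚ) * ε) := by
    rw [← tel, Finset.mul_sum]
    exact Finset.sum_congr rfl fun i _ => hterm i
  have hcard : ((Finset.Ico j k).card : ℚ) = (k : ℚ) - (j : ℚ) := by
    rw [Nat.card_Ico]
    push_cast [Nat.cast_sub hjk.le]
    ring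
  have hkj : (0 : ℚ) < (k : ℚ) - (j : ℚ) := by
    have : (j : ℚ) < (k : ℚ) := by exact_mod_cast hjk
    linarith
  have hden : (k : ℚ) * ε - (j : ℚ) * ε = ((k : ℚ) - (j : ℚ)) * ε := by ring
  have key : (f ((k : ℚ) * ε) - f ((j : ℚ) * ε)) / ((k : ℚ) * ε - (j : ℚ) * ε)
      - Df ((j : ℚ) * ε)
      = (∑ i ∈ Finset.Ico j k, (Df ((i : ℚ) * ε) - Df ((j : ℚ) * ε))) / ((k : ℚ) - (j : ℚ)) := by
    rw [hsum, hden, Finset.sum_sub_distrib, Finset.sum_const, nsmul_eq_mul, hcard]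
    field_simp
  rw [key, abs_div, abs_of_pos hkj, div_lt_iff₀ hkj]
  calc |∑ i ∈ Finset.Ico j k, (Df ((i : ℚ) * ε) - Df ((j : ℚ) * ε))|
      ≤ ∑ i ∈ Finset.Ico j k, |Df ((i : ℚ) * ε) - Df ((j : ℚ) * ε)| :=
        Finset.abs_sum_le_sum_abs _ _
    _ < ∑ i ∈ Finset.Ico j k, q := by
        apply Finset.sum_lt_sum_of_nonempty
        · exact Finset.nonempty_Ico.mpr hjk
        · exact hvar
    _ = q * ((k : ℚ) - (j : ℚ)) := by rw [Finset.sum_const, nsmul_eq_mul, hcard]; ring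
end

section
/- Let ε > 0 with 1/ε ∈ ℕ, G_ε the grid {kε : 0 ≤ k ≤ 1/ε}, f : G_ε → ℝ, and suppose the difference quotient Df is uniformly continuous in the sense that for every q > 0 there is δ > 0 with |Df(u) - Df(a)| < q whenever |u - a| < δ. Then for every q > 0 there is δ > 0 such that for all a, x ∈ G_ε with 0 < x - a < δ, |(f(x)-f(a))/(x-a) - Df(a)| < q. -/
/-! The secant slope of `f` over `[jε, kε]` is, by telescoping, the average of `Df` over the
grid points `jε, …, (k-1)ε`. These all lie within `kε - jε` of `jε`, so when that distance is
below the modulus of `Df` for `q`, each term, and hence the average, is within `q` of `Df (jε)`. -/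

open Finset

theorem Finset.abs_sum_div_card_sub_lt {ι K : Type*} [Field K] [LinearOrder K]
    [IsStrictOrderedRing K] {s : Finset ι} (hs : s.Nonempty) {a : ι → K} {c q : K}
    (h : ∀ i ∈ s, |a i - c| < q) :
    |(∑ i ∈ s, a i) / #s - c| < q := by
  have hcard : (0 : K) < #s := by exact_mod_cast hs.card_pos
  have hsum : (∑ i ∈ s, a i) / #s - c = (∑ i ∈ s, (a i - c)) / #s := by
    rw [sum_sub_distrib, sum_const, nsmul_eq_mul]
    field_simp
  rw [hsum, abs_div, abs_of_pos hcard, div_lt_iff₀ hcard]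
  calc |∑ i ∈ s, (a i - c)| ≤ ∑ i ∈ s, |a i - c| := abs_sum_le_sum_abs _ _
    _ < ∑ _i ∈ s, q := sum_lt_sum_of_nonempty hs h
    _ = q * #s := by rw [sum_const, nsmul_eq_mul, mul_comm]

theorem grid_slope_eq_average {ε : ℝ} (hε : ε ≠ 0) {N : ℕ} {f Df : ℝ → ℝ}
    (hDf : ∀ k : ℕ, k < N → Df ((k : ℝ) * ε) = (f (((k : ℝ) + 1) * ε) - f ((k : ℝ) * ε)) / ε)
    {j k : ℕ} (hjk : j < k) (hkN : k ≤ N) :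
    (f ((k : ℝ) * ε) - f ((j : ℝ) * ε)) / ((k : ℝ) * ε - (j : ℝ) * ε)
      = (∑ m ∈ Ico j k, Df ((m : ℝ) * ε)) / #(Ico j k) := by
  have hstep : ∀ m ∈ Ico j k, ε * Df ((m : ℝ) * ε)
      = f (((m + 1 : ℕ) : ℝ) * ε) - f ((m : ℝ) * ε) := by
    intro m hm
    rw [hDf m (by grind), Nat.cast_succ]
    field_simp
  have htelescope : f ((k : ℝ) * ε) - f ((j : ℝ) * ε) = ε * ∑ m ∈ Ico j k, Df ((m : ℝ) * ε) := by
    rw [mul_sum, sum_congr rfl hstep, sum_Ico_sub (fun n : ℕ => f ((n : ℝ) * ε)) hjk.le]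
  have hlength : (k : ℝ) * ε - (j : ℝ) * ε = ε * #(Ico j k) := by
    rw [Nat.card_Ico, Nat.cast_sub hjk.le]
    ring
  rw [htelescope, hlength, mul_div_mul_left _ _ hε]

theorem stmt_6_general (ε : ℝ) (hε : 0 < ε) (N : ℕ)
    (f Df : ℝ → ℝ)
    (hDf : ∀ k : ℕ, k < N → Df ((k : ℝ) * ε) = (f (((k : ℝ) + 1) * ε) - f ((k : ℝ) * ε)) / ε)
    (hcont : ∀ q > (0 : ℝ), ∃ δ > (0 : ℝ), ∀ j k : ℕ, j < N → k < N →
      |(k : ℝ) * ε - (j : ℝ) * ε| < δ → |Df ((k : ℝ) * ε) - Df ((j : ℝ) * ε)| < q) :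
    ∀ q > (0 : ℝ), ∃ δ > (0 : ℝ), ∀ j k : ℕ, j < k → k ≤ N →
      (k : ℝ) * ε - (j : ℝ) * ε < δ →
      |(f ((k : ℝ) * ε) - f ((j : ℝ) * ε)) / ((k : ℝ) * ε - (j : ℝ) * ε)
          - Df ((j : ℝ) * ε)| < q := by
  intro q hq
  obtain ⟨δ, hδ, hmod⟩ := hcont q hq
  refine ⟨δ, hδ, fun j k hjk hkN hdist => ?_⟩
  rw [grid_slope_eq_average hε.ne' hDf hjk hkN]
  refine abs_sum_div_card_sub_lt (nonempty_Ico.mpr hjk) fun m hm => ?_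
  obtain ⟨hjm, hmk⟩ := mem_Ico.mp hm
  have hjm' : (j : ℝ) * ε ≤ m * ε := by gcongr
  have hmk' : (m : ℝ) * ε < k * ε := by gcongr
  refine hmod j m (by omega) (by omega) ?_
  rw [abs_of_nonneg (sub_nonneg.mpr hjm')]
  linarith

/-- If the difference quotient `Df` of a grid function `f` is uniformly continuous,
then secant slopes over short grid intervals are uniformly close to `Df` at the left
endpoint (Theorem 8.3.1 in standard terms). -/
theorem stmt_6 (ε : ℝ) (hε : 0 < ε) (N : ℕ) (hN : (N : ℝ) * ε = 1)
    (f Df : ℝ → ℝ)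
    (hDf : ∀ k : ℕ, k < N → Df ((k : ℝ) * ε) = (f (((k : ℝ) + 1) * ε) - f ((k : ℝ) * ε)) / ε)
    (hcont : ∀ q > (0 : ℝ), ∃ δ > (0 : ℝ), ∀ j k : ℕ, j < N → k < N →
      |(k : ℝ) * ε - (j : ℝ) * ε| < δ → |Df ((k : ℝ) * ε) - Df ((j : ℝ) * ε)| < q) :
    ∀ q > (0 : ℝ), ∃ δ > (0 : ℝ), ∀ j k : ℕ, j < k → k ≤ N →
      (k : ℝ) * ε - (j : ℝ) * ε < δ →
      |(f ((k : ℝ) * ε) - f ((j : ℝ) * ε)) / ((k : ℝ) * ε - (j : ℝ) * ε)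
          - Df ((j : ℝ) * ε)| < q :=
  stmt_6_general ε hε N f Df hDf hcont
end
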